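/- arXiv:2003.08255 — 2 statements merged into one kernel-verified Lean document; each statement's English description precedes it below -/
import Mathlib

section
/- Let H be a finite simple graph with at least one edge and let G = KG(H) be the complement of the line graph of H. In every proper coloring of G, every vertex of G has at least χ(G) − 1 distinct colors appearing on its closed neighborhood. -/
/-!
Write `v = {a, b}`. An edge of `H` that is neither `v` nor disjoint from `v` contains `a` or `b`,
so the vertices of `KG H` outside the closed neighbourhood of `v` are covered by two independent
sets: the edges through `a` and the edges through `b`. Keep the coloring on the closed
neighbourhood, give the edges through `a` the color of `v` (which no neighbour of `v` carries), and
the remaining ones a single fresh color. This colors `KG H` with one color more than appear on the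
closed neighbourhood of `v`.
-/

open SimpleGraph

/-- `KG H` is the complement of the line graph of `H`: its vertices are the edges of `H`,
two of them being adjacent exactly when the corresponding edges of `H` are disjoint. -/
def KG {V : Type*} (H : SimpleGraph V) : SimpleGraph H.edgeSet where
  Adj e f := e ≠ f ∧ ∀ v, v ∈ (e : Sym2 V) → v ∉ (f : Sym2 V)
  symm := by
    constructor
    rintro e f ⟨hne, h⟩
    exact ⟨hne.symm, fun v hvf hve => h v hve hvf⟩
  loopless := by
    constructor
    rintro e ⟨hne, -⟩
    exact hne rfl

/-- A proper coloring of a graph with colors in `ℕ`. -/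
def IsProperColoring {W : Type*} (G : SimpleGraph W) (c : W → ℕ) : Prop :=
  ∀ ⦃u v⦄, G.Adj u v → c u ≠ c v

/-- The chromatic number: least `n` such that `G` has a proper coloring with `n` colors. -/
noncomputable def chromNum {W : Type*} (G : SimpleGraph W) : ℕ :=
  sInf {n | G.Colorable n}

/-- Number of colors appearing on the closed neighborhood of `v` under the coloring `c`. -/
noncomputable def closedNbhdColors {W : Type*} (G : SimpleGraph W) (c : W → ℕ) (v : W) : ℕ :=
  (c '' {u | u = v ∨ G.Adj v u}).ncard

section Recoloring

variable {W : Type*} {G : SimpleGraph W}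

theorem chromNum_le_of_colorable {n : ℕ} (h : G.Colorable n) : chromNum G ≤ n :=
  Nat.sInf_le h

theorem colorable_ncard_range {β : Type*} {f : W → β} (hf : ∀ ⦃u w⦄, G.Adj u w → f u ≠ f w)
    (hfin : (Set.range f).Finite) : G.Colorable (Set.range f).ncard := by
  have := hfin.fintype
  let C : G.Coloring (Set.range f) := Coloring.mk (Set.rangeFactorization f)
    fun huw heq => hf huw (congrArg Subtype.val heq)
  simpa [← Nat.card_eq_fintype_card, Nat.card_coe_set_eq] using C.colorable

open Classical in
/-- `none` is the fresh color. -/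
noncomputable def recolorOutsideClosedNbhd (G : SimpleGraph W) (c : W → ℕ) (v : W) (A : Set W)
    (u : W) : Option ℕ :=
  if u = v ∨ G.Adj v u then some (c u) else if u ∈ A then some (c v) else none

variable {c : W → ℕ} {v : W} {A B : Set W}

theorem range_recolorOutsideClosedNbhd_subset :
    Set.range (recolorOutsideClosedNbhd G c v A) ⊆
      insert none (some '' (c '' {u | u = v ∨ G.Adj v u})) := by
  rintro _ ⟨u, rfl⟩
  unfold recolorOutsideClosedNbhd
  split_ifs with hu
  · exact Or.inr ⟨c u, ⟨u, hu, rfl⟩, rfl⟩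
  · exact Or.inr ⟨c v, ⟨v, Or.inl rfl, rfl⟩, rfl⟩
  · exact Or.inl rfl

theorem recolorOutsideClosedNbhd_ne_of_adj_of_mem_of_notMem (hc : IsProperColoring G c)
    {u w : W} (hu : u = v ∨ G.Adj v u) (hw : ¬(w = v ∨ G.Adj v w)) (huw : G.Adj u w) :
    recolorOutsideClosedNbhd G c v A u ≠ recolorOutsideClosedNbhd G c v A w := by
  unfold recolorOutsideClosedNbhd
  rw [if_pos hu, if_neg hw]
  split_ifs
  · have huv : u ≠ v := by
      rintro rfl
      exact hw (Or.inr huw)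
    simpa using (hc (hu.resolve_left huv)).symm
  · simp

theorem recolorOutsideClosedNbhd_ne_of_adj (hc : IsProperColoring G c) (hA : G.IsIndepSet A)
    (hB : G.IsIndepSet B) (hcover : ∀ u, ¬(u = v ∨ G.Adj v u) → u ∈ A ∨ u ∈ B)
    ⦃u w : W⦄ (huw : G.Adj u w) :
    recolorOutsideClosedNbhd G c v A u ≠ recolorOutsideClosedNbhd G c v A w := by
  by_cases hu : u = v ∨ G.Adj v u <;> by_cases hw : w = v ∨ G.Adj v w
  · simpa [recolorOutsideClosedNbhd, hu, hw] using hc huw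
  · exact recolorOutsideClosedNbhd_ne_of_adj_of_mem_of_notMem hc hu hw huw
  · exact (recolorOutsideClosedNbhd_ne_of_adj_of_mem_of_notMem hc hw hu huw.symm).symm
  · unfold recolorOutsideClosedNbhd
    rw [if_neg hu, if_neg hw]
    by_cases huA : u ∈ A <;> by_cases hwA : w ∈ A <;> simp only [huA, hwA, if_true, if_false]
    · exact absurd huw (hA huA hwA huw.ne)
    · simp
    · simp
    · exact absurd huw
        (hB ((hcover u hu).resolve_left huA) ((hcover w hw).resolve_left hwA) huw.ne)

theorem chromNum_le_closedNbhdColors_add_one (hc : IsProperColoring G c) (hA : G.IsIndepSet A)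
    (hB : G.IsIndepSet B) (hcover : ∀ u, ¬(u = v ∨ G.Adj v u) → u ∈ A ∨ u ∈ B)
    (hfin : (c '' {u | u = v ∨ G.Adj v u}).Finite) :
    chromNum G ≤ closedNbhdColors G c v + 1 := by
  have hsub := range_recolorOutsideClosedNbhd_subset (G := G) (c := c) (v := v) (A := A)
  have hfinSup := (hfin.image some).insert none
  refine chromNum_le_of_colorable <|
    (colorable_ncard_range (recolorOutsideClosedNbhd_ne_of_adj hc hA hB hcover)
      (hfinSup.subset hsub)).mono ?_
  calc (Set.range (recolorOutsideClosedNbhd G c v A)).ncard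
      ≤ (insert none (some '' (c '' {u | u = v ∨ G.Adj v u}))).ncard :=
        Set.ncard_le_ncard hsub hfinSup
    _ ≤ (some '' (c '' {u | u = v ∨ G.Adj v u})).ncard + 1 := Set.ncard_insert_le _ _
    _ = closedNbhdColors G c v + 1 := by
        rw [Set.ncard_image_of_injective _ (Option.some_injective ℕ)]; rfl

end Recoloring

namespace KG

variable {V : Type*} {H : SimpleGraph V}

theorem isIndepSet_incidenceSet (x : V) : (KG H).IsIndepSet {e | x ∈ (e : Sym2 V)} :=
  fun _ he _ hf _ hadj => hadj.2 x he hf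

theorem exists_mem_mem_of_not_adj {e f : H.edgeSet} (hne : f ≠ e) (h : ¬(KG H).Adj e f) :
    ∃ x, x ∈ (e : Sym2 V) ∧ x ∈ (f : Sym2 V) := by
  simpa [KG, hne.symm] using h

end KG

theorem closedNbhdColors_ge_of_KG_general {V : Type*} [Fintype V] (H : SimpleGraph V)
    (c : H.edgeSet → ℕ) (hc : IsProperColoring (KG H) c)
    (v : H.edgeSet) :
    chromNum (KG H) - 1 ≤ closedNbhdColors (KG H) c v := by
  obtain ⟨⟨a, b⟩, hab⟩ := Quot.exists_rep (v : Sym2 V)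
  have hcover : ∀ u, ¬(u = v ∨ (KG H).Adj v u) →
      u ∈ {e : H.edgeSet | a ∈ (e : Sym2 V)} ∨ u ∈ {e : H.edgeSet | b ∈ (e : Sym2 V)} := by
    intro u hu
    obtain ⟨huv, hadj⟩ := not_or.mp hu
    obtain ⟨x, hxv, hxu⟩ := KG.exists_mem_mem_of_not_adj huv hadj
    rcases Sym2.mem_iff.mp (hab ▸ hxv) with rfl | rfl
    exacts [Or.inl hxu, Or.inr hxu]
  have := chromNum_le_closedNbhdColors_add_one hc (KG.isIndepSet_incidenceSet a)
    (KG.isIndepSet_incidenceSet b) hcover (Set.toFinite _)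
  omega

/-- In every proper coloring of the complement `KG H` of the line graph of `H`, every
vertex has at least `chromNum (KG H) - 1` colors in its closed neighborhood. -/
theorem closedNbhdColors_ge_of_KG {V : Type*} [Fintype V] (H : SimpleGraph V)
    (hE : H.edgeSet.Nonempty) (c : H.edgeSet → ℕ) (hc : IsProperColoring (KG H) c)
    (v : H.edgeSet) :
    chromNum (KG H) - 1 ≤ closedNbhdColors (KG H) c v :=
  closedNbhdColors_ge_of_KG_general H c hc v
end

section
/- Let H₁ and H₂ be finite simple graphs on disjoint vertex sets and let H₁ * H₂ be their join. Then cd₂(H₁ * H₂) = min( cd₂(H₁) + v(H₂), τ(H₁) + τ(H₂), v(H₁) + cd₂(H₂) ). -/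
open SimpleGraph

/-- A vertex cover: a set of vertices meeting every edge. -/
def IsVertexCover {V : Type*} (H : SimpleGraph V) (S : Set V) : Prop :=
  ∀ ⦃u v⦄, H.Adj u v → u ∈ S ∨ v ∈ S

/-- The vertex cover number. -/
noncomputable def tauN {V : Type*} (H : SimpleGraph V) : ℕ :=
  sInf {n | ∃ S : Set V, _root_.IsVertexCover H S ∧ S.ncard = n}

/-- The 2-colorability defect: the minimum number of vertices whose removal
leaves a bipartite (i.e. 2-colorable) induced subgraph. -/
noncomputable def cd2 {V : Type*} (H : SimpleGraph V) : ℕ :=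
  sInf {n | ∃ X : Set V, X.ncard = n ∧ (H.induce Xᶜ).Colorable 2}

/-- The join of two graphs on disjoint vertex sets: their disjoint union together with
all edges between a vertex of the first and a vertex of the second. -/
def gJoin {V₁ V₂ : Type*} (H₁ : SimpleGraph V₁) (H₂ : SimpleGraph V₂) :
    SimpleGraph (V₁ ⊕ V₂) where
  Adj x y :=
    match x, y with
    | .inl a, .inl b => H₁.Adj a b
    | .inl _, .inr _ => True
    | .inr _, .inl _ => True
    | .inr a, .inr b => H₂.Adj a b
  symm := by
    refine ⟨?_⟩
    rintro (a | a) (b | b) h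
    · exact h.symm
    · trivial
    · trivial
    · exact h.symm
  loopless := by
    refine ⟨?_⟩
    rintro (a | a) h
    · exact H₁.irrefl h
    · exact H₂.irrefl h

/-!
A set `X` of vertices of `H₁ * H₂` leaves a bipartite graph exactly when either `X` contains one
side entirely and leaves the other side bipartite, or `X` meets both sides in vertex covers.
Indeed, once both sides keep a vertex, every remaining vertex is adjacent to all remaining
vertices of the other side, so a remaining edge inside one side would close a triangle;
conversely, two independent sets are the colour classes of a 2-colouring of their join.
Minimising `|X|` over these three cases gives the three terms of the minimum.
-/

theorem Set.ncard_eq_ncard_preimage_inl_add_ncard_preimage_inr {α β : Type*}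
    {s : Set (α ⊕ β)} (hs : s.Finite) :
    s.ncard = (Sum.inl ⁻¹' s).ncard + (Sum.inr ⁻¹' s).ncard := by
  conv_lhs => rw [← Set.image_preimage_inl_union_image_preimage_inr s]
  rw [Set.ncard_union_eq Set.disjoint_image_inl_image_inr
      ((hs.preimage Sum.inl_injective.injOn).image _)
      ((hs.preimage Sum.inr_injective.injOn).image _),
    Set.ncard_image_of_injective _ Sum.inl_injective,
    Set.ncard_image_of_injective _ Sum.inr_injective]

@[simp] theorem Set.preimage_inl_sumEquiv_symm {α β : Type*} (s : Set α × Set β) :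
    Sum.inl ⁻¹' Set.sumEquiv.symm s = s.1 :=
  congrArg Prod.fst (Set.sumEquiv.apply_symm_apply s)

@[simp] theorem Set.preimage_inr_sumEquiv_symm {α β : Type*} (s : Set α × Set β) :
    Sum.inr ⁻¹' Set.sumEquiv.symm s = s.2 :=
  congrArg Prod.snd (Set.sumEquiv.apply_symm_apply s)

namespace SimpleGraph

theorem Colorable.not_adj_of_adj_of_adj {V : Type*} {G : SimpleGraph V} (hG : G.Colorable 2)
    {u v w : V} (hu : G.Adj w u) (hv : G.Adj w v) : ¬G.Adj u v := by
  obtain ⟨c⟩ := hG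
  intro huv
  have := c.valid hu
  have := c.valid hv
  have := c.valid huv
  omega

end SimpleGraph

section VertexCover

variable {V : Type*} {H : SimpleGraph V} {S : Set V}

theorem induce_compl_eq_bot_iff_isVertexCover : H.induce Sᶜ = ⊥ ↔ _root_.IsVertexCover H S := by
  simp only [eq_bot_iff_forall_not_adj, comap_adj, Function.Embedding.subtype_apply,
    Subtype.forall, Set.mem_compl_iff, _root_.IsVertexCover]
  exact ⟨fun h u v huv => by_contra fun hc => h u (not_or.1 hc).1 v (not_or.1 hc).2 huv,
    fun h u hu v hv huv => (h huv).elim hu hv⟩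

theorem tauN_le_ncard (h : _root_.IsVertexCover H S) : tauN H ≤ S.ncard :=
  Nat.sInf_le ⟨S, h, rfl⟩

theorem exists_isVertexCover_ncard_eq_tauN (H : SimpleGraph V) :
    ∃ S : Set V, _root_.IsVertexCover H S ∧ S.ncard = tauN H :=
  Nat.sInf_mem (s := {n | ∃ S : Set V, _root_.IsVertexCover H S ∧ S.ncard = n})
    ⟨_, Set.univ, fun _ _ _ => Or.inl trivial, rfl⟩

end VertexCover

section ColorabilityDefect

variable {V : Type*} {H : SimpleGraph V} {X : Set V}

theorem cd2_le_ncard (h : (H.induce Xᶜ).Colorable 2) : cd2 H ≤ X.ncard :=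
  Nat.sInf_le ⟨X, rfl, h⟩

theorem exists_ncard_eq_cd2 (H : SimpleGraph V) :
    ∃ X : Set V, X.ncard = cd2 H ∧ (H.induce Xᶜ).Colorable 2 :=
  Nat.sInf_mem (s := {n | ∃ X : Set V, X.ncard = n ∧ (H.induce Xᶜ).Colorable 2})
    ⟨_, Set.univ, rfl, by rw [Set.compl_univ]; exact .of_isEmpty 2⟩

end ColorabilityDefect

section Join

variable {V₁ V₂ : Type*} {H₁ : SimpleGraph V₁} {H₂ : SimpleGraph V₂}

@[simp] theorem gJoin_adj_inl_inl {a b : V₁} : (gJoin H₁ H₂).Adj (.inl a) (.inl b) ↔ H₁.Adj a b :=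
  .rfl

@[simp] theorem gJoin_adj_inr_inr {a b : V₂} : (gJoin H₁ H₂).Adj (.inr a) (.inr b) ↔ H₂.Adj a b :=
  .rfl

variable (H₁ H₂) in
def SimpleGraph.Embedding.gJoinInl : H₁ ↪g gJoin H₁ H₂ where
  toFun := Sum.inl
  inj' := Sum.inl_injective
  map_rel_iff' := .rfl

variable (H₁ H₂) in
def SimpleGraph.Embedding.gJoinInr : H₂ ↪g gJoin H₁ H₂ where
  toFun := Sum.inr
  inj' := Sum.inr_injective
  map_rel_iff' := .rfl

variable (H₁ H₂) in
def induceGJoinIso (s : Set (V₁ ⊕ V₂)) :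
    (gJoin H₁ H₂).induce s ≃g gJoin (H₁.induce (Sum.inl ⁻¹' s)) (H₂.induce (Sum.inr ⁻¹' s)) where
  toEquiv := Equiv.subtypeSum
  map_rel_iff' := by rintro ⟨a | b, _⟩ ⟨a' | b', _⟩ <;> rfl

theorem colorable_two_gJoin_iff :
    (gJoin H₁ H₂).Colorable 2 ↔
      (IsEmpty V₂ ∧ H₁.Colorable 2) ∨ (IsEmpty V₁ ∧ H₂.Colorable 2) ∨ (H₁ = ⊥ ∧ H₂ = ⊥) := by
  constructor
  · intro h
    by_cases h₂ : IsEmpty V₂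
    · exact .inl ⟨h₂, h.of_hom (Embedding.gJoinInl H₁ H₂).toHom⟩
    by_cases h₁ : IsEmpty V₁
    · exact .inr (.inl ⟨h₁, h.of_hom (Embedding.gJoinInr H₁ H₂).toHom⟩)
    obtain ⟨v₁⟩ := not_isEmpty_iff.1 h₁
    obtain ⟨v₂⟩ := not_isEmpty_iff.1 h₂
    refine .inr (.inr ⟨eq_bot_iff_forall_not_adj.2 fun a b => ?_,
      eq_bot_iff_forall_not_adj.2 fun a b => ?_⟩)
    · exact h.not_adj_of_adj_of_adj (w := .inr v₂) (u := .inl a) (v := .inl b) trivial trivial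
    · exact h.not_adj_of_adj_of_adj (w := .inl v₁) (u := .inr a) (v := .inr b) trivial trivial
  · rintro (⟨h₂, ⟨c⟩⟩ | ⟨h₁, ⟨c⟩⟩ | ⟨rfl, rfl⟩)
    · refine ⟨.mk (Sum.elim c isEmptyElim) ?_⟩
      rintro (a | b) (a' | b') h
      exacts [c.valid h, isEmptyElim b', isEmptyElim b, isEmptyElim b]
    · refine ⟨.mk (Sum.elim isEmptyElim c) ?_⟩
      rintro (a | b) (a' | b') h
      exacts [isEmptyElim a, isEmptyElim a, isEmptyElim a', c.valid h]
    · refine ⟨.mk (Sum.elim 0 1) ?_⟩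
      rintro (a | b) (a' | b') h <;> simp_all

theorem colorable_two_induce_compl_gJoin_iff (X : Set (V₁ ⊕ V₂)) :
    ((gJoin H₁ H₂).induce Xᶜ).Colorable 2 ↔
      (Sum.inr ⁻¹' X = Set.univ ∧ (H₁.induce (Sum.inl ⁻¹' X)ᶜ).Colorable 2) ∨
      (Sum.inl ⁻¹' X = Set.univ ∧ (H₂.induce (Sum.inr ⁻¹' X)ᶜ).Colorable 2) ∨
      (_root_.IsVertexCover H₁ (Sum.inl ⁻¹' X) ∧ _root_.IsVertexCover H₂ (Sum.inr ⁻¹' X)) := by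
  rw [colorable_congr (induceGJoinIso H₁ H₂ Xᶜ), colorable_two_gJoin_iff]
  simp only [Set.preimage_compl, Set.isEmpty_coe_sort, Set.compl_empty_iff,
    induce_compl_eq_bot_iff_isVertexCover]

theorem cd2_gJoin_le_ncard_add_ncard [Finite V₁] [Finite V₂] {S₁ : Set V₁} {S₂ : Set V₂}
    (h : ((gJoin H₁ H₂).induce (Set.sumEquiv.symm (S₁, S₂))ᶜ).Colorable 2) :
    cd2 (gJoin H₁ H₂) ≤ S₁.ncard + S₂.ncard := by
  simpa only [Set.ncard_eq_ncard_preimage_inl_add_ncard_preimage_inr (Set.toFinite _),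
    Set.preimage_inl_sumEquiv_symm, Set.preimage_inr_sumEquiv_symm] using cd2_le_ncard h

end Join

/-- The 2-colorability defect of the join of two graphs. -/
theorem cd2_gJoin {V₁ V₂ : Type*} [Fintype V₁] [Fintype V₂]
    (H₁ : SimpleGraph V₁) (H₂ : SimpleGraph V₂) :
    cd2 (gJoin H₁ H₂) =
      min (cd2 H₁ + Fintype.card V₂) (min (tauN H₁ + tauN H₂) (Fintype.card V₁ + cd2 H₂)) := by
  apply le_antisymm
  · obtain ⟨X₁, hX₁, hcol₁⟩ := exists_ncard_eq_cd2 H₁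
    obtain ⟨X₂, hX₂, hcol₂⟩ := exists_ncard_eq_cd2 H₂
    obtain ⟨C₁, hC₁, hC₁card⟩ := exists_isVertexCover_ncard_eq_tauN H₁
    obtain ⟨C₂, hC₂, hC₂card⟩ := exists_isVertexCover_ncard_eq_tauN H₂
    rw [← hX₁, ← hX₂, ← hC₁card, ← hC₂card, ← Nat.card_eq_fintype_card, ← Nat.card_eq_fintype_card,
      ← Set.ncard_univ, ← Set.ncard_univ]
    refine le_min (cd2_gJoin_le_ncard_add_ncard ?_)
      (le_min (cd2_gJoin_le_ncard_add_ncard ?_) (cd2_gJoin_le_ncard_add_ncard ?_)) <;>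
      rw [colorable_two_induce_compl_gJoin_iff, Set.preimage_inl_sumEquiv_symm,
        Set.preimage_inr_sumEquiv_symm]
    · exact .inl ⟨rfl, hcol₁⟩
    · exact .inr (.inr ⟨hC₁, hC₂⟩)
    · exact .inr (.inl ⟨rfl, hcol₂⟩)
  · obtain ⟨X, hX, hcol⟩ := exists_ncard_eq_cd2 (gJoin H₁ H₂)
    rw [← hX, Set.ncard_eq_ncard_preimage_inl_add_ncard_preimage_inr (Set.toFinite X)]
    rcases (colorable_two_induce_compl_gJoin_iff X).1 hcol with
      ⟨h₂, h₁⟩ | ⟨h₁, h₂⟩ | ⟨h₁, h₂⟩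
    · rw [h₂, Set.ncard_univ, Nat.card_eq_fintype_card]
      exact min_le_of_left_le (by grw [cd2_le_ncard h₁])
    · rw [h₁, Set.ncard_univ, Nat.card_eq_fintype_card]
      exact min_le_of_right_le (min_le_of_right_le (by grw [cd2_le_ncard h₂]))
    · exact min_le_of_right_le (min_le_of_left_le (by grw [tauN_le_ncard h₁, tauN_le_ncard h₂]))
end
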